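/- Let G be a cobipartite finite simple graph that is saturated with respect to the clique partition (V_1, V_2). Then there exists an optimal zero forcing set F for G (i.e., one of size Z(G)) such that F forces from V_1 to V_2. -/

import Mathlib

/-!  Common definitions: zero forcing (standard, loop, positive semidefinite),
zero-nonzero patterns, triangles, and related graph parameters. -/

variable {V : Type*}

/-- Standard zero forcing rule: with filled set `S`, the filled vertex `v` can force
its unique unfilled neighbor `u`. -/
def StdForce (G : SimpleGraph V) (S : Set V) (v u : V) : Prop :=
  v ∈ S ∧ u ∉ S ∧ G.Adj v u ∧ ∀ w, G.Adj v w → w ∉ S → w = u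

/-- Adjacency in the looping of `G` with loops at the vertices in `L`
(a vertex counts as its own neighbor iff it has a loop). -/
def LoopAdj (G : SimpleGraph V) (L : Set V) (v w : V) : Prop :=
  G.Adj v w ∨ (v = w ∧ v ∈ L)

/-- Loop zero forcing rule (the forcing vertex need not be filled): `v` can force `u`
if `u` is the only unfilled neighbor of `v` in the looping. -/
def LoopForce (G : SimpleGraph V) (L : Set V) (S : Set V) (v u : V) : Prop :=
  u ∉ S ∧ LoopAdj G L v u ∧ ∀ w, LoopAdj G L v w → w ∉ S → w = u

/-- Positive semidefinite zero forcing rule: the filled vertex `v` can force the unfilled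
vertex `u` if `u` is the only neighbor of `v` in the connected component of `u` of the
subgraph induced by the unfilled vertices. -/
def PsdForce (G : SimpleGraph V) (S : Set V) (v u : V) : Prop :=
  v ∈ S ∧ u ∉ S ∧ G.Adj v u ∧
    ∀ w, G.Adj v w → w ∉ S →
      Relation.ReflTransGen (fun a b => G.Adj a b ∧ a ∉ S ∧ b ∉ S) u w → w = u

/-- The vertices performing a force in a forcing sequence. -/
def sourcesOf (seq : List (V × V)) : Set V := {v | ∃ p ∈ seq, p.1 = v}

/-- The vertices that get forced in a forcing sequence. -/
def targetsOf (seq : List (V × V)) : Set V := {u | ∃ p ∈ seq, p.2 = u}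

/-- The filled set after performing all forces of `seq` starting from `F`. -/
def filledAfter (F : Set V) (seq : List (V × V)) : Set V := F ∪ targetsOf seq

/-- `ValidSeq rule seq F`: starting with `F` as the filled set, the sequence of forces
`seq` is permitted (each force in turn is allowed by `rule`, and each vertex forces
at most once). -/
def ValidSeq (rule : Set V → V → V → Prop) : List (V × V) → Set V → Prop
  | [], _ => True
  | (v, u) :: rest, F => rule F v u ∧ (∀ p ∈ rest, p.1 ≠ v) ∧ ValidSeq rule rest (insert u F)

/-- `F` is a zero forcing set w.r.t. the forcing rule `rule`. -/
def IsZFSet (rule : Set V → V → V → Prop) (F : Set V) : Prop :=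
  ∃ seq : List (V × V), ValidSeq rule seq F ∧ filledAfter F seq = Set.univ

/-- `F` is a zero forcing set (w.r.t. `rule`) from which `R` can be the set of vertices
that force: some (automatically complete) forcing sequence from `F` fills every vertex
and the set of vertices performing a force is exactly `R`. -/
def ForcesWith (rule : Set V → V → V → Prop) (F R : Set V) : Prop :=
  ∃ seq : List (V × V), ValidSeq rule seq F ∧ filledAfter F seq = Set.univ ∧
    sourcesOf seq = R

/-- The zero forcing number w.r.t. a forcing rule. -/
noncomputable def Znum (rule : Set V → V → V → Prop) : ℕ :=
  sInf {n | ∃ F : Set V, IsZFSet rule F ∧ F.ncard = n}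

/-- The (standard) zero forcing number `Z(G)`. -/
noncomputable def Z (G : SimpleGraph V) : ℕ := Znum (StdForce G)

/-- The zero forcing number of the looping of `G` with loops at `L`. -/
noncomputable def Zloop (G : SimpleGraph V) (L : Set V) : ℕ := Znum (LoopForce G L)

/-- The positive semidefinite zero forcing number `Z₊(G)`. -/
noncomputable def Zplus (G : SimpleGraph V) : ℕ := Znum (PsdForce G)

/-- The enhanced zero forcing number `Ẑ(G)`: the maximum over all loopings of `G` of the
zero forcing number of the looping. -/
noncomputable def Zhat (G : SimpleGraph V) : ℕ := sSup {n | ∃ L : Set V, Zloop G L = n}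

/-- `F` is a direct zero forcing set for `G`: some forcing sequence from `F` fills every
vertex and every vertex that performs a force belongs to `F`. -/
def IsDirectZFSet (G : SimpleGraph V) (F : Set V) : Prop :=
  ∃ seq : List (V × V), ValidSeq (StdForce G) seq F ∧ filledAfter F seq = Set.univ ∧
    sourcesOf seq ⊆ F

/-- The direct zero forcing number `Z_d(G)`. -/
noncomputable def Zd (G : SimpleGraph V) : ℕ :=
  sInf {n | ∃ F : Set V, IsDirectZFSet G F ∧ F.ncard = n}

/-- A zero-nonzero pattern `Y` (entry `Y i j` means the `(i,j)` entry is `*`)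
has a `k × k` submatrix that is a triangle. -/
def HasTriOfSize {ρ γ : Type*} (Y : ρ → γ → Prop) (k : ℕ) : Prop :=
  ∃ (r : Fin k → ρ) (c : Fin k → γ), Function.Injective r ∧ Function.Injective c ∧
    (∀ i, Y (r i) (c i)) ∧ ∀ i j : Fin k, i < j → ¬ Y (r i) (c j)

/-- The triangle number `tri(Y)` of a zero-nonzero pattern. -/
noncomputable def tri {ρ γ : Type*} (Y : ρ → γ → Prop) : ℕ := sSup {k | HasTriOfSize Y k}

/-- Membership in `S_znz(G)`: off the diagonal, the pattern matches the adjacency of `G`. -/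
def InSznz (G : SimpleGraph V) (A : V → V → Prop) : Prop :=
  ∀ i j : V, i ≠ j → (A i j ↔ G.Adj i j)

/-- The zero-nonzero pattern of the looping of `G` with loops at `L`. -/
def loopPattern (G : SimpleGraph V) (L : Set V) : V → V → Prop :=
  fun i j => (i = j ∧ i ∈ L) ∨ (i ≠ j ∧ G.Adj i j)

/-- The submatrix of the pattern `Y` with rows `R` and columns `C` is a triangle:
there are enumerations of `R` and `C` realizing a lower-triangular pattern with `*`
diagonal (in particular `|R| = |C|`). -/
def SubIsTriangle {ρ γ : Type*} (Y : ρ → γ → Prop) (R : Finset ρ) (C : Finset γ) : Prop :=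
  ∃ (k : ℕ) (r : Fin k → ρ) (c : Fin k → γ),
    Function.Injective r ∧ Function.Injective c ∧
    (∀ x : ρ, x ∈ R ↔ ∃ i, r i = x) ∧ (∀ y : γ, y ∈ C ↔ ∃ i, c i = y) ∧
    (∀ i, Y (r i) (c i)) ∧ ∀ i j : Fin k, i < j → ¬ Y (r i) (c j)

/-- `(R, C)` is a persistent triangle of `G`. -/
def PersistentTriangle (G : SimpleGraph V) (R C : Finset V) : Prop :=
  ∀ A : V → V → Prop, InSznz G A → SubIsTriangle A R C

/-- `F` is a direct zero forcing set for `G` from which `R` can be the set of vertices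
that force. -/
def DirectForcesWith (G : SimpleGraph V) (F R : Set V) : Prop :=
  ∃ seq : List (V × V), ValidSeq (StdForce G) seq F ∧ filledAfter F seq = Set.univ ∧
    sourcesOf seq = R ∧ R ⊆ F

/-- `(range r, range c)` is a partition of `G` according to the `m × n` pattern `Y`,
with labelings given by `r` and `c`. -/
def PartitionAccording (G : SimpleGraph V) {m n : ℕ} (Y : Fin m → Fin n → Prop)
    (r : Fin m → V) (c : Fin n → V) : Prop :=
  Function.Injective r ∧ Function.Injective c ∧ (∀ i j, r i ≠ c j) ∧
    (∀ v : V, (∃ i, r i = v) ∨ (∃ j, c j = v)) ∧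
    ∀ i j, G.Adj (r i) (c j) ↔ Y i j

/-- `F` is a zero forcing set for `G` that forces from `V1` to `V2`. -/
def ForcesFromTo (G : SimpleGraph V) (F V1 V2 : Set V) : Prop :=
  V1 ⊆ F ∧ ∃ seq : List (V × V), ValidSeq (StdForce G) seq F ∧
    filledAfter F seq = Set.univ ∧ sourcesOf seq ⊆ V1 ∧ targetsOf seq ⊆ V2

/-- `(V1, V2)` is a partition of the vertex set of `G` into two cliques. -/
def IsCliquePartition (G : SimpleGraph V) (V1 V2 : Set V) : Prop :=
  Disjoint V1 V2 ∧ V1 ∪ V2 = Set.univ ∧ G.IsClique V1 ∧ G.IsClique V2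

/-- `G` is cobipartite. -/
def Cobipartite (G : SimpleGraph V) : Prop := ∃ V1 V2 : Set V, IsCliquePartition G V1 V2

/-- `G` is the cobipartite graph associated with the pattern `Y`, via labelings `r`, `c`. -/
def CobipAssociated (G : SimpleGraph V) {m n : ℕ} (Y : Fin m → Fin n → Prop)
    (r : Fin m → V) (c : Fin n → V) : Prop :=
  PartitionAccording G Y r c ∧ G.IsClique (Set.range r) ∧ G.IsClique (Set.range c)

/-- `z` is a critical vertex: some optimal forcing sequence neither lets `z` force
nor forces `z`. -/
def Critical (G : SimpleGraph V) (z : V) : Prop :=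
  ∃ (F : Set V) (seq : List (V × V)), F.ncard = Z G ∧ ValidSeq (StdForce G) seq F ∧
    filledAfter F seq = Set.univ ∧ z ∉ sourcesOf seq ∧ z ∉ targetsOf seq

/-- `z` is an uncritical vertex: in every optimal forcing sequence, exactly one of the
following holds: `z` performs a force, or `z` gets forced. -/
def Uncritical (G : SimpleGraph V) (z : V) : Prop :=
  ∀ (F : Set V) (seq : List (V × V)), F.ncard = Z G → ValidSeq (StdForce G) seq F →
    filledAfter F seq = Set.univ → (z ∈ sourcesOf seq ↔ z ∉ targetsOf seq)

/-- The maximum nullity `M(G)` over the field `𝔽`. -/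
noncomputable def Mnum (𝔽 : Type*) [Field 𝔽] [Fintype V] [DecidableEq V]
    (G : SimpleGraph V) : ℕ :=
  sSup {k | ∃ A : Matrix V V 𝔽, A.IsSymm ∧ (∀ i j : V, i ≠ j → (A i j ≠ 0 ↔ G.Adj i j)) ∧
    k = Fintype.card V - A.rank}

/-- The minimum rank `mr_𝔽(Y)` of a zero-nonzero pattern over the field `𝔽`. -/
noncomputable def mr (𝔽 : Type*) [Field 𝔽] {m n : ℕ} (Y : Fin m → Fin n → Prop) : ℕ :=
  sInf {k | ∃ A : Matrix (Fin m) (Fin n) 𝔽, (∀ i j, A i j ≠ 0 ↔ Y i j) ∧ A.rank = k}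

/-- `G` is a `k`-tree: there is a construction ordering of the vertices in which the
first `k+1` vertices form a clique and every later vertex is adjacent among the earlier
vertices to exactly a `k`-clique. -/
def IsKTree (k : ℕ) [Fintype V] (G : SimpleGraph V) : Prop :=
  k + 1 ≤ Fintype.card V ∧ ∃ ord : V ≃ Fin (Fintype.card V),
    (∀ u v : V, (ord u : ℕ) < k + 1 → (ord v : ℕ) < k + 1 → u ≠ v → G.Adj u v) ∧
    ∀ v : V, k + 1 ≤ (ord v : ℕ) →
      G.IsClique {u : V | (ord u : ℕ) < (ord v : ℕ) ∧ G.Adj u v} ∧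
      {u : V | (ord u : ℕ) < (ord v : ℕ) ∧ G.Adj u v}.ncard = k

/-!
A forcing sequence is a *staircase*: every vertex that forces is neither equal nor adjacent to
any vertex forced later. As `V1` and `V2` are cliques, once a vertex of `V1` has forced, every
later target lies in `V2`, and a vertex of `V2` that forces leaves nothing of `V2` unfilled, so
it forces last. Hence if the first force starts in `V1`, saturation lets us redirect the first
force onto a neighbour in `V2` and let a neighbour in `V1` of the last target perform the last
force; this gives a staircase of the same length from `V1` to `V2` (the other case is symmetric,
reading the staircase backwards). Such a staircase is a forcing sequence from the complement of
its targets, a set of size `|V| - length = Z(G)`.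
-/

lemma IsCliquePartition.symm {G : SimpleGraph V} {V1 V2 : Set V} (h : IsCliquePartition G V1 V2) :
    IsCliquePartition G V2 V1 :=
  ⟨h.1.symm, Set.union_comm V1 V2 ▸ h.2.1, h.2.2.2, h.2.2.1⟩

section Staircase

variable {G : SimpleGraph V} {A B V1 V2 : Set V}

lemma targetsOf_cons (p : V × V) (l : List (V × V)) :
    targetsOf (p :: l) = insert p.2 (targetsOf l) := by
  ext x
  simp [targetsOf, eq_comm]

lemma ncard_targetsOf {l : List (V × V)} (h : (l.map Prod.snd).Nodup) :
    (targetsOf l).ncard = l.length := by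
  classical
  have : targetsOf l = ↑(l.map Prod.snd).toFinset := by
    ext x
    simp [targetsOf]
  rw [this, Set.ncard_coe_finset, List.toFinset_card_of_nodup h, List.length_map]

lemma ValidSeq.snd_notMem {seq : List (V × V)} {F : Set V}
    (h : ValidSeq (StdForce G) seq F) : ∀ p ∈ seq, p.2 ∉ F := by
  induction seq generalizing F with
  | nil => simp
  | cons q rest ih =>
    obtain ⟨⟨-, hu, -⟩, -, hrest⟩ := h
    rw [List.forall_mem_cons]
    exact ⟨hu, fun p hp hpF => ih hrest p hp (Set.mem_insert_of_mem _ hpF)⟩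

structure IsStaircase (G : SimpleGraph V) (A B : Set V) (l : List (V × V)) : Prop where
  fst_mem : ∀ p ∈ l, p.1 ∈ A
  snd_mem : ∀ p ∈ l, p.2 ∈ B
  adj : ∀ p ∈ l, G.Adj p.1 p.2
  pairwise : l.Pairwise fun p q => p.1 ≠ q.2 ∧ ¬ G.Adj p.1 q.2

lemma isStaircase_nil : IsStaircase G A B [] :=
  ⟨by simp, by simp, by simp, .nil⟩

lemma isStaircase_cons {a b : V} {l : List (V × V)} :
    IsStaircase G A B ((a, b) :: l) ↔ a ∈ A ∧ b ∈ B ∧ G.Adj a b ∧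
      (∀ q ∈ l, a ≠ q.2 ∧ ¬ G.Adj a q.2) ∧ IsStaircase G A B l := by
  constructor
  · rintro ⟨h₁, h₂, h₃, h₄⟩
    rw [List.pairwise_cons] at h₄
    simp only [List.forall_mem_cons] at h₁ h₂ h₃
    exact ⟨h₁.1, h₂.1, h₃.1, h₄.1, h₁.2, h₂.2, h₃.2, h₄.2⟩
  · rintro ⟨ha, hb, hab, hl, h₁, h₂, h₃, h₄⟩
    exact ⟨List.forall_mem_cons.2 ⟨ha, h₁⟩, List.forall_mem_cons.2 ⟨hb, h₂⟩,
      List.forall_mem_cons.2 ⟨hab, h₃⟩, List.pairwise_cons.2 ⟨hl, h₄⟩⟩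

lemma ValidSeq.isStaircase {seq : List (V × V)} {F : Set V}
    (h : ValidSeq (StdForce G) seq F) : IsStaircase G Set.univ Set.univ seq := by
  induction seq generalizing F with
  | nil => exact isStaircase_nil
  | cons q rest ih =>
    obtain ⟨v, u⟩ := q
    have hrest := h.2.2
    obtain ⟨⟨hv, -, hvu, huniq⟩, -, -⟩ := h
    refine isStaircase_cons.2 ⟨trivial, trivial, hvu, fun p hp => ?_, ih hrest⟩
    have hp := hrest.snd_notMem p hp
    refine ⟨fun hvp => hp (hvp ▸ Set.mem_insert_of_mem _ hv), fun hvp => hp ?_⟩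
    rw [huniq _ hvp fun hpF => hp (Set.mem_insert_of_mem _ hpF)]
    exact Set.mem_insert _ _

namespace IsStaircase

lemma snd_nodup {l : List (V × V)} (h : IsStaircase G A B l) : (l.map Prod.snd).Nodup :=
  List.pairwise_map.2 <| h.pairwise.imp_of_mem fun hp _ hpq heq => hpq.2 (heq ▸ h.adj _ hp)

lemma swap_reverse {l : List (V × V)} (h : IsStaircase G A B l) :
    IsStaircase G B A (l.map Prod.swap).reverse := by
  refine ⟨?_, ?_, ?_, ?_⟩
  rotate_right
  · rw [List.pairwise_reverse, List.pairwise_map]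
    exact h.pairwise.imp fun hpq => ⟨Ne.symm hpq.1, fun hadj => hpq.2 hadj.symm⟩
  all_goals simp only [List.mem_reverse, List.forall_mem_map, Prod.fst_swap, Prod.snd_swap]
  · exact h.snd_mem
  · exact h.fst_mem
  · exact fun p hp => (h.adj p hp).symm

lemma snd_notMem_of_isClique {a b : V} {l : List (V × V)} (h : IsStaircase G A B ((a, b) :: l))
    {K : Set V} (hK : G.IsClique K) (ha : a ∈ K) : ∀ q ∈ l, q.2 ∉ K := fun q hq hqK =>
  have haq := (isStaircase_cons.1 h).2.2.2.1 q hq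
  haq.2 (hK ha hqK haq.1)

lemma validSeq {l : List (V × V)} (h : IsStaircase G A B l) :
    ValidSeq (StdForce G) l (targetsOf l)ᶜ := by
  induction l with
  | nil => trivial
  | cons q rest ih =>
    obtain ⟨a, b⟩ := q
    have hnodup := h.snd_nodup
    obtain ⟨-, -, hab, hrest, h'⟩ := isStaircase_cons.1 h
    have hb : b ∉ targetsOf rest := by
      rintro ⟨q, hq, rfl⟩
      exact (List.nodup_cons.1 hnodup).1 (List.mem_map.2 ⟨q, hq, rfl⟩)
    refine ⟨⟨?_, ?_, hab, ?_⟩, fun q hq hqa => (hrest q hq).2 (hqa ▸ h'.adj q hq), ?_⟩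
    · rw [targetsOf_cons]
      rintro (hab' | ⟨q, hq, hqa⟩)
      · exact G.ne_of_adj hab hab'
      · exact (hrest q hq).1 hqa.symm
    · simp [targetsOf_cons]
    · intro w haw hw
      rw [Set.notMem_compl_iff, targetsOf_cons] at hw
      rcases hw with rfl | ⟨q, hq, rfl⟩
      · rfl
      · exact absurd haw (hrest q hq).2
    · have hfilled : insert b (targetsOf ((a, b) :: rest))ᶜ = (targetsOf rest)ᶜ := by
        ext x
        by_cases hx : x = b <;> simp_all [targetsOf_cons]
      exact hfilled ▸ ih h'

lemma forcesFromTo {l : List (V × V)} (h : IsStaircase G V1 V2 l) (hdisj : Disjoint V1 V2) :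
    ForcesFromTo G (targetsOf l)ᶜ V1 V2 := by
  refine ⟨?_, l, h.validSeq, Set.compl_union_self _, ?_, ?_⟩
  · rintro x hx ⟨p, hp, rfl⟩
    exact hdisj.notMem_of_mem_left hx (h.snd_mem p hp)
  · rintro _ ⟨p, hp, rfl⟩
    exact h.fst_mem p hp
  · rintro _ ⟨p, hp, rfl⟩
    exact h.snd_mem p hp

lemma exists_isStaircase_map_snd_eq (hC2 : G.IsClique V2)
    (hsat2 : ∀ v ∈ V2, ∃ w ∈ V1, G.Adj v w)
    {l : List (V × V)} (h : IsStaircase G (V1 ∪ V2) V2 l) :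
    ∃ l', IsStaircase G V1 V2 l' ∧ l'.map Prod.snd = l.map Prod.snd := by
  induction l with
  | nil => exact ⟨[], isStaircase_nil, rfl⟩
  | cons q rest ih =>
    obtain ⟨a, b⟩ := q
    obtain ⟨ha, hb, hab, hrest, h'⟩ := isStaircase_cons.1 h
    rcases ha with ha | ha
    · obtain ⟨l', hl', hsnd⟩ := ih h'
      refine ⟨(a, b) :: l', isStaircase_cons.2 ⟨ha, hb, hab, ?_, hl'⟩, by simp [hsnd]⟩
      rw [← List.forall_mem_map (P := fun c => a ≠ c ∧ ¬ G.Adj a c), hsnd, List.forall_mem_map]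
      exact hrest
    · -- after `a ∈ V2` has forced, nothing of the clique `V2` is left to force
      have hnil : rest = [] := List.eq_nil_iff_forall_not_mem.2 fun q hq =>
        h.snd_notMem_of_isClique hC2 ha q hq (h'.snd_mem q hq)
      obtain ⟨z, hz, hbz⟩ := hsat2 b hb
      exact ⟨[(z, b)], isStaircase_cons.2 ⟨hz, hb, hbz.symm, by simp, isStaircase_nil⟩,
        by simp [hnil]⟩

lemma exists_isStaircase_of_cons_fst_mem (hpart : IsCliquePartition G V1 V2)
    (hsat1 : ∀ v ∈ V1, ∃ w ∈ V2, G.Adj v w) (hsat2 : ∀ v ∈ V2, ∃ w ∈ V1, G.Adj v w)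
    {a b : V} {l : List (V × V)} (h : IsStaircase G Set.univ Set.univ ((a, b) :: l))
    (ha : a ∈ V1) : ∃ l', IsStaircase G V1 V2 l' ∧ l'.length = l.length + 1 := by
  obtain ⟨-, hU, hC1, hC2⟩ := hpart
  have hmem (x : V) : x ∈ V1 ∪ V2 := hU ▸ Set.mem_univ x
  obtain ⟨y, hy, hay⟩ := hsat1 a ha
  obtain ⟨-, -, -, hrest, h'⟩ := isStaircase_cons.1 h
  have hl : IsStaircase G (V1 ∪ V2) V2 ((a, y) :: l) :=
    isStaircase_cons.2 ⟨hmem a, hy, hay, hrest, fun p _ => hmem p.1,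
      fun p hp => (hmem p.2).resolve_left (h.snd_notMem_of_isClique hC1 ha p hp),
      h'.adj, h'.pairwise⟩
  obtain ⟨l', hl', hsnd⟩ := hl.exists_isStaircase_map_snd_eq hC2 hsat2
  exact ⟨l', hl', by simpa using congrArg List.length hsnd⟩

lemma exists_isStaircase_length_eq (hpart : IsCliquePartition G V1 V2)
    (hsat1 : ∀ v ∈ V1, ∃ w ∈ V2, G.Adj v w) (hsat2 : ∀ v ∈ V2, ∃ w ∈ V1, G.Adj v w)
    {l : List (V × V)} (h : IsStaircase G Set.univ Set.univ l) :
    ∃ l', IsStaircase G V1 V2 l' ∧ l'.length = l.length := by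
  cases l with
  | nil => exact ⟨[], isStaircase_nil, rfl⟩
  | cons q rest =>
    obtain ⟨a, b⟩ := q
    rcases (hpart.2.1 ▸ Set.mem_univ a : a ∈ V1 ∪ V2) with ha | ha
    · exact h.exists_isStaircase_of_cons_fst_mem hpart hsat1 hsat2 ha
    · obtain ⟨l', hl', hlen⟩ := h.exists_isStaircase_of_cons_fst_mem hpart.symm hsat2 hsat1 ha
      exact ⟨_, hl'.swap_reverse, by simp [hlen]⟩

end IsStaircase

end Staircase

lemma ValidSeq.ncard_add_length [Finite V] {G : SimpleGraph V} {seq : List (V × V)} {F : Set V}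
    (h : ValidSeq (StdForce G) seq F) (hfill : filledAfter F seq = Set.univ) :
    F.ncard + seq.length = Nat.card V := by
  have hcompl : Fᶜ = targetsOf seq := by
    ext x
    refine ⟨fun hx => (hfill ▸ Set.mem_univ x : x ∈ filledAfter F seq).resolve_left hx, ?_⟩
    rintro ⟨p, hp, rfl⟩
    exact h.snd_notMem p hp
  rw [← ncard_targetsOf h.isStaircase.snd_nodup, ← hcompl, Set.ncard_add_ncard_compl]

lemma exists_isZFSet_ncard_eq_Z (G : SimpleGraph V) :
    ∃ F, IsZFSet (StdForce G) F ∧ F.ncard = Z G :=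
  Nat.sInf_mem (s := {n | ∃ F : Set V, IsZFSet (StdForce G) F ∧ F.ncard = n})
    ⟨_, Set.univ, ⟨[], trivial, Set.univ_union _⟩, rfl⟩

theorem exists_optimal_forcing_from_to_of_saturated_general
    {V : Type*} [Fintype V] (G : SimpleGraph V) (V1 V2 : Set V)
    (hpart : IsCliquePartition G V1 V2)
    (hsat1 : ∀ v ∈ V1, ∃ w ∈ V2, G.Adj v w)
    (hsat2 : ∀ v ∈ V2, ∃ w ∈ V1, G.Adj v w) :
    ∃ F : Set V, F.ncard = Z G ∧ ForcesFromTo G F V1 V2 := by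
  obtain ⟨F₀, ⟨seq, hseq, hfill⟩, hF₀⟩ := exists_isZFSet_ncard_eq_Z G
  obtain ⟨l, hl, hlen⟩ :=
    hseq.isStaircase.exists_isStaircase_length_eq hpart hsat1 hsat2
  refine ⟨(targetsOf l)ᶜ, ?_, hl.forcesFromTo hpart.1⟩
  have h₀ := hseq.ncard_add_length hfill
  have h₁ := hl.validSeq.ncard_add_length (Set.compl_union_self _)
  omega

/-- If `G` is cobipartite and saturated with respect to the clique
partition `(V₁, V₂)`, then some optimal zero forcing set for `G` forces from `V₁`
to `V₂`. -/
theorem exists_optimal_forcing_from_to_of_saturated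
    {V : Type*} [Fintype V] [DecidableEq V] (G : SimpleGraph V) (V1 V2 : Set V)
    (hpart : IsCliquePartition G V1 V2)
    (hsat1 : ∀ v ∈ V1, ∃ w ∈ V2, G.Adj v w)
    (hsat2 : ∀ v ∈ V2, ∃ w ∈ V1, G.Adj v w) :
    ∃ F : Set V, F.ncard = Z G ∧ ForcesFromTo G F V1 V2 :=
  exists_optimal_forcing_from_to_of_saturated_general G V1 V2 hpart hsat1 hsat2
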